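/- arXiv:1407.8315 — 3 statements merged into one kernel-verified Lean document; each statement's English description precedes it below -/
import Mathlib

section
/- Under the same balls-into-bins model (K items uniformly distributed, N/d bins of d cells each), for any integer f ≥ 1, the probability that at least f bins each receive more than a_m items is at most ((K/f) · (dK/N)^(a_m) · e^(a_m+2) / (a_m+1)^(a_m+1))^f. -/
/-! If at least `f` bins overflow, then some `f`-set `S` of bins overflows, and every bin `b ∈ S`
contains an `(a + 1)`-set `T b` of items. For fixed `S` and `T` the sets `T b` are disjoint, and
each of their `(a + 1) f` items has to land in one of the `d` cells of its bin, which happens with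
probability `(d / N) ^ ((a + 1) f)`. A union bound over the `C(N / d, f)` choices of `S` and the
`C(K, a + 1) ^ f` choices of `T` bounds the probability by `C(N / d, f) (C(K, a + 1) (d / N) ^ (a + 1)) ^ f`,
and `C(n, k) ≤ (n e / k) ^ k`, a consequence of `k ^ k / k! ≤ e ^ k`, turns this into the claim. -/

open Finset Real
open scoped Nat

theorem choose_le_mul_exp_div_pow (n k : ℕ) : (n.choose k : ℝ) ≤ (n * exp 1 / k) ^ k := by
  rcases k.eq_zero_or_pos with rfl | hk
  · simp
  have hk' : (0 : ℝ) < k := by exact_mod_cast hk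
  have hfac : (k : ℝ) ^ k ≤ exp 1 ^ k * k ! := by
    have := pow_div_factorial_le_exp (k : ℝ) k.cast_nonneg k
    rwa [div_le_iff₀ (by positivity), ← exp_one_pow] at this
  calc (n.choose k : ℝ) ≤ n ^ k / k ! := Nat.choose_le_pow_div k n
    _ ≤ (n * exp 1 / k) ^ k := by
      rw [div_pow, mul_pow, div_le_div_iff₀ (by positivity) (by positivity)]
      calc (n : ℝ) ^ k * k ^ k ≤ n ^ k * (exp 1 ^ k * k !) := by gcongr
        _ = _ := by ring

theorem card_filter_mul_le_of_cover {α ι : Type*} [DecidableEq α] {s : Finset α} {I : Finset ι}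
    {p : α → Prop} [DecidablePred p] {q : ι → α → Prop} [∀ i, DecidablePred (q i)] {X B : ℕ}
    (hcover : ∀ a ∈ s, p a → ∃ i ∈ I, q i a) (hbound : ∀ i ∈ I, #{a ∈ s | q i a} * X ≤ B) :
    #{a ∈ s | p a} * X ≤ #I * B := by
  have hsub : {a ∈ s | p a} ⊆ I.biUnion fun i => {a ∈ s | q i a} := by
    intro a ha
    obtain ⟨has, hpa⟩ := mem_filter.1 ha
    obtain ⟨i, hi, hqa⟩ := hcover a has hpa
    exact mem_biUnion.2 ⟨i, hi, mem_filter.2 ⟨has, hqa⟩⟩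
  calc #{a ∈ s | p a} * X ≤ (∑ i ∈ I, #{a ∈ s | q i a}) * X := by
        gcongr
        exact (card_le_card hsub).trans card_biUnion_le
    _ = ∑ i ∈ I, #{a ∈ s | q i a} * X := sum_mul ..
    _ ≤ #I * B := sum_le_card_nsmul _ _ _ hbound

theorem card_forall_mem_mul_pow_le {ι α : Type*} [Fintype ι] [DecidableEq ι] [Fintype α]
    (U : Finset ι) (P : ι → α → Prop) [∀ i, DecidablePred (P i)] {c : ℕ}
    (hP : ∀ i ∈ U, #{x | P i x} ≤ c) :
    #{ω : ι → α | ∀ i ∈ U, P i (ω i)} * Fintype.card α ^ #U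
      ≤ c ^ #U * Fintype.card α ^ Fintype.card ι := by
  have hpi : ({ω : ι → α | ∀ i ∈ U, P i (ω i)} : Finset _)
      = Fintype.piFinset fun i => if i ∈ U then univ.filter (P i) else univ := by
    ext ω
    simp only [mem_filter, mem_univ, true_and, Fintype.mem_piFinset]
    exact forall_congr' fun i => by split_ifs with h <;> simp [h]
  rw [hpi, Fintype.card_piFinset, ← prod_mul_prod_compl U, ← card_compl_add_card U, pow_add]
  have hin : ∏ i ∈ U, #(if i ∈ U then univ.filter (P i) else univ) ≤ c ^ #U :=
    prod_le_pow_card _ _ _ fun i hi => by simpa [hi] using hP i hi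
  have hout : ∏ i ∈ Uᶜ, #(if i ∈ U then univ.filter (P i) else univ) = Fintype.card α ^ #Uᶜ :=
    prod_eq_pow_card fun i hi => by simp [mem_compl.1 hi]
  rw [hout, mul_assoc]
  gcongr

theorem card_fin_mod_eq_le {M d N : ℕ} (hMd : M * d = N) (r : ℕ) :
    #{x : Fin N | (x : ℕ) % M = r} ≤ d := by
  calc #{x : Fin N | (x : ℕ) % M = r} ≤ #(range d) := by
        refine card_le_card_of_injOn (fun x => (x : ℕ) / M) (fun x _ => ?_) fun x hx y hy hxy => ?_
        · simpa using Nat.div_lt_of_lt_mul (hMd ▸ x.isLt)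
        · rw [mem_coe, mem_filter] at hx hy
          rw [Fin.ext_iff, ← Nat.div_add_mod x M, ← Nat.div_add_mod y M, hx.2, hy.2]
          exact congrArg (M * · + r) hxy
    _ = d := card_range d

variable {K N M d : ℕ}

def binLoad (M : ℕ) (ω : Fin K → Fin N) (b : Fin M) : ℕ := #{i | (ω i : ℕ) % M = b}

theorem card_forall_mem_bin_mul_pow_le (hMd : M * d = N) {S : Finset (Fin M)} {r : ℕ}
    (T : S → Finset (Fin K)) (hT : ∀ b, #(T b) = r) :
    #{ω : Fin K → Fin N | ∀ b : S, ∀ i ∈ T b, (ω i : ℕ) % M = b} * N ^ (r * #S)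
      ≤ d ^ (r * #S) * N ^ K := by
  rcases eq_empty_or_nonempty
    ({ω : Fin K → Fin N | ∀ b : S, ∀ i ∈ T b, (ω i : ℕ) % M = b} : Finset _) with h | ⟨ω₀, hω₀⟩
  · rw [h, card_empty, zero_mul]
    positivity
  replace hω₀ := (mem_filter.1 hω₀).2
  set U := univ.biUnion T
  -- an item of `T b ∩ T b'` would lie in both bins `b` and `b'` under `ω₀`
  have hU : #U = r * #S := by
    rw [card_biUnion fun b _ b' _ hbb' => disjoint_left.2 fun i hi hi' =>
      hbb' (Subtype.ext (Fin.ext ((hω₀ b i hi).symm.trans (hω₀ b' i hi'))))]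
    simp [hT, mul_comm]
  have hsub : ({ω : Fin K → Fin N | ∀ b : S, ∀ i ∈ T b, (ω i : ℕ) % M = b} : Finset _)
      ⊆ ({ω : Fin K → Fin N | ∀ i ∈ U, (ω i : ℕ) % M = ω₀ i % M} : Finset _) := by
    intro ω hω
    simp only [mem_filter, mem_univ, true_and] at hω ⊢
    intro i hi
    obtain ⟨b, -, hi⟩ := mem_biUnion.1 hi
    rw [hω b i hi, hω₀ b i hi]
  calc _ ≤ #{ω : Fin K → Fin N | ∀ i ∈ U, (ω i : ℕ) % M = ω₀ i % M} * N ^ (r * #S) := by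
        gcongr
    _ ≤ d ^ (r * #S) * N ^ K := by
        convert card_forall_mem_mul_pow_le U (fun i (x : Fin N) => (x : ℕ) % M = ω₀ i % M)
          (fun i _ => card_fin_mod_eq_le hMd _) using 4 <;> simp [hU]

theorem card_forall_overflow_mul_pow_le (hMd : M * d = N) (a : ℕ) (S : Finset (Fin M)) :
    #{ω : Fin K → Fin N | ∀ b ∈ S, a < binLoad M ω b} * N ^ ((a + 1) * #S)
      ≤ K.choose (a + 1) ^ #S * (d ^ ((a + 1) * #S) * N ^ K) := by
  have hI : #(Fintype.piFinset fun _ : S => powersetCard (a + 1) (univ : Finset (Fin K)))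
      = K.choose (a + 1) ^ #S := by simp
  rw [← hI]
  refine card_filter_mul_le_of_cover (fun ω _ hω => ?_) fun T hT =>
    card_forall_mem_bin_mul_pow_le hMd T fun b =>
      (mem_powersetCard.1 (Fintype.mem_piFinset.1 hT b)).2
  choose T hT using fun b : S =>
    exists_subset_card_eq (hω b b.2 : a + 1 ≤ #{i | (ω i : ℕ) % M = b})
  exact ⟨T, Fintype.mem_piFinset.2 fun b => mem_powersetCard.2 ⟨subset_univ _, (hT b).2⟩,
    fun b i hi => (mem_filter.1 ((hT b).1 hi)).2⟩

theorem card_overflow_mul_pow_le (hMd : M * d = N) (a f : ℕ) :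
    #{ω : Fin K → Fin N | f ≤ #{b | a < binLoad M ω b}} * N ^ ((a + 1) * f)
      ≤ M.choose f * (K.choose (a + 1) ^ f * (d ^ ((a + 1) * f) * N ^ K)) := by
  have hI : #(powersetCard f (univ : Finset (Fin M))) = M.choose f := by simp
  rw [← hI]
  refine card_filter_mul_le_of_cover (q := fun S ω => ∀ b ∈ S, a < binLoad M ω b)
    (fun ω _ hω => ?_) fun S hS => ?_
  · obtain ⟨S, hS, hcard⟩ := exists_subset_card_eq hω
    exact ⟨S, mem_powersetCard.2 ⟨subset_univ _, hcard⟩, fun b hb => (mem_filter.1 (hS hb)).2⟩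
  · obtain rfl := (mem_powersetCard.1 hS).2
    exact card_forall_overflow_mul_pow_le hMd a S

theorem card_overflow_le_choose_mul_pow (hMd : M * d = N) (hN : 0 < N) (a f : ℕ) :
    (#{ω : Fin K → Fin N | f ≤ #{b | a < binLoad M ω b}} : ℝ)
      ≤ M.choose f * (K.choose (a + 1) * (d / N) ^ (a + 1)) ^ f * N ^ K := by
  have hN' : (0 : ℝ) < N := by exact_mod_cast hN
  have hsplit : (M.choose f : ℝ) * (K.choose (a + 1) * (d / N) ^ (a + 1)) ^ f * N ^ K
      = M.choose f * (K.choose (a + 1) ^ f * (d ^ ((a + 1) * f) * N ^ K)) / N ^ ((a + 1) * f) := by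
    simp only [div_pow, mul_pow, pow_mul]
    field_simp
  rw [hsplit, le_div_iff₀ (by positivity)]
  exact_mod_cast card_overflow_mul_pow_le hMd a f

theorem choose_mul_pow_le_overflow_bound (hMd : M * d = N) (hd : 0 < d) (hN : 0 < N) (a f : ℕ) :
    (M.choose f : ℝ) * (K.choose (a + 1) * (d / N) ^ (a + 1)) ^ f
      ≤ (K / f * (d * K / N) ^ a * exp 1 ^ (a + 2) / (a + 1) ^ (a + 1)) ^ f := by
  have hd' : (0 : ℝ) < d := by exact_mod_cast hd
  have hN' : (0 : ℝ) < N := by exact_mod_cast hN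
  have hM : (M : ℝ) = N / d := by
    rw [eq_div_iff hd'.ne']
    exact_mod_cast hMd
  have hbase : N / d * exp 1 * ((K * exp 1 / (a + 1)) ^ (a + 1) * (d / N) ^ (a + 1))
      = K * (d * K / N) ^ a * exp 1 ^ (a + 2) / (a + 1) ^ (a + 1) := by
    simp only [div_pow, mul_pow]
    field_simp
    ring
  calc (M.choose f : ℝ) * (K.choose (a + 1) * (d / N) ^ (a + 1)) ^ f
      ≤ (M * exp 1 / f) ^ f * ((K * exp 1 / (a + 1 : ℕ)) ^ (a + 1) * (d / N) ^ (a + 1)) ^ f := by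
        gcongr
        · exact choose_le_mul_exp_div_pow M f
        · exact choose_le_mul_exp_div_pow K (a + 1)
    _ = _ := by
        rw [← mul_pow, hM]
        push_cast
        congr 1
        linear_combination hbase / (f : ℝ)

open Classical Finset in
theorem stmt_2_general (N d K a_m f : ℕ) (hN : 1 ≤ N) (hdvd : d ∣ N) :
    ((Finset.univ.filter (fun ω : Fin K → Fin N =>
        f ≤ (Finset.univ.filter (fun b : Fin (N / d) => a_m <
          (Finset.univ.filter (fun i : Fin K =>
            (ω i : ℕ) % (N / d) = (b : ℕ))).card)).card)).card : ℝ)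
      / (Fintype.card (Fin K → Fin N)) ≤
    (((K : ℝ) / f) * ((d : ℝ) * K / N) ^ a_m * Real.exp 1 ^ (a_m + 2)
        / ((a_m : ℝ) + 1) ^ (a_m + 1)) ^ f := by
  have hMd : N / d * d = N := Nat.div_mul_cancel hdvd
  have hd : 0 < d := Nat.pos_of_dvd_of_pos hdvd hN
  rw [Fintype.card_fun, Fintype.card_fin, Fintype.card_fin, Nat.cast_pow,
    div_le_iff₀ (by positivity)]
  exact (card_overflow_le_choose_mul_pow hMd hN a_m f).trans
    (mul_le_mul_of_nonneg_right (choose_mul_pow_le_overflow_bound hMd hd hN a_m f) (by positivity))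

open Classical Finset in
/-- Balls-into-bins: K locations uniformly among N positions, N/d bins of d cells
    each (bin `b` gets positions congruent to `b` mod `N/d`).  For any `f ≥ 1`,
    the probability that at least `f` bins each receive more than `a_m` items is
    at most `((K/f) · (dK/N)^(a_m) · e^(a_m+2) / (a_m+1)^(a_m+1))^f`. -/
theorem stmt_2 (N d K a_m f : ℕ) (hd : 1 ≤ d) (hN : 1 ≤ N) (hdvd : d ∣ N)
    (hf : 1 ≤ f) :
    ((Finset.univ.filter (fun ω : Fin K → Fin N =>
        f ≤ (Finset.univ.filter (fun b : Fin (N / d) => a_m <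
          (Finset.univ.filter (fun i : Fin K =>
            (ω i : ℕ) % (N / d) = (b : ℕ))).card)).card)).card : ℝ)
      / (Fintype.card (Fin K → Fin N)) ≤
    (((K : ℝ) / f) * ((d : ℝ) * K / N) ^ a_m * Real.exp 1 ^ (a_m + 2)
        / ((a_m : ℝ) + 1) ^ (a_m + 1)) ^ f :=
  stmt_2_general N d K a_m f hN hdvd
end

section
/- Let z_0, ..., z_{a−1} ∈ ℂ be distinct and p_0, ..., p_{a−1} ∈ ℂ nonzero with syndromes m_l = Σ_j p_j z_j^l for 0 ≤ l ≤ 2a−1. Suppose (q_0,...,q_{b−1}, w_0,...,w_{b−1}) with b ≤ a, w_j distinct, q_j nonzero, also satisfies m_l = Σ_{j=0}^{b−1} q_j w_j^l for 0 ≤ l ≤ 2a−1. Then b = a and, after a permutation, (q_j, w_j) = (p_j, z_j) for all j. -/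
/-!
Record a representation `∑ j, p j * z j ^ l` by its coefficient function `extend z p 0 : R → R`,
whose support is the set of nodes. The difference of two such functions is supported on at most
`a + b ≤ 2a` points and has vanishing moments of orders `0, …, 2a - 1`, so it vanishes by the
invertibility of the Vandermonde matrix on its support. Equal coefficient functions have equal
supports, i.e. the same nodes, and the same coefficients at each node.
-/

open Finset Function

variable {α R M ι κ : Type*}

theorem Finset.eq_zero_of_forall_sum_mul_pow_eq_zero [CommRing R] [IsDomain R]
    (s : Finset R) (c : R → R) (h : ∀ l < #s, ∑ x ∈ s, c x * x ^ l = 0) :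
    ∀ x ∈ s, c x = 0 := by
  let e : Fin #s ≃ s := s.equivFin.symm
  have hc : (fun i => c (e i)) = 0 := by
    refine Matrix.eq_zero_of_forall_pow_sum_mul_pow_eq_zero
      (Subtype.val_injective.comp e.injective) fun l => ?_
    rw [← h l l.isLt, ← s.sum_coe_sort]
    exact e.sum_comp fun x => c x * (x : R) ^ (l : ℕ)
  intro x hx
  simpa [e] using congrFun hc (e.symm ⟨x, hx⟩)

theorem sum_extend_mul_eq [NonUnitalNonAssocSemiring R] [Fintype ι] {z : ι → α}
    (hz : Injective z) (p : ι → R) (g : α → R) {S : Finset α} (hS : ∀ j, z j ∈ S) :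
    ∑ x ∈ S, extend z p 0 x * g x = ∑ j, p j * g (z j) := by
  classical
  rw [← sum_subset (s₁ := univ.image z) (by simpa [subset_iff] using hS), sum_image]
  · simp only [hz.extend_apply]
  · exact fun i _ j _ h => hz h
  · intro x _ hx
    rw [extend_apply' _ _ _ (by simpa using hx), Pi.zero_apply, zero_mul]

theorem extend_eq_of_sum_mul_pow_eq [CommRing R] [IsDomain R] [Fintype ι] [Fintype κ] {n : ℕ}
    {z : ι → R} {w : κ → R}
    (hz : Injective z) (hw : Injective w) (p : ι → R) (q : κ → R)
    (hcard : Fintype.card ι + Fintype.card κ ≤ n)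
    (hsum : ∀ l < n, ∑ j, p j * z j ^ l = ∑ j, q j * w j ^ l) :
    extend z p 0 = extend w q 0 := by
  classical
  set S := univ.image z ∪ univ.image w
  have hzS : ∀ j, z j ∈ S := fun j => mem_union_left _ (mem_image_of_mem _ (mem_univ j))
  have hwS : ∀ j, w j ∈ S := fun j => mem_union_right _ (mem_image_of_mem _ (mem_univ j))
  have hS : #S ≤ n := (card_union_le _ _).trans <|
    (add_le_add card_image_le card_image_le).trans hcard
  have hdiff := S.eq_zero_of_forall_sum_mul_pow_eq_zero (extend z p 0 - extend w q 0)
    fun l hl => by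
      simp only [Pi.sub_apply, sub_mul, sum_sub_distrib, sum_extend_mul_eq hz p _ hzS,
        sum_extend_mul_eq hw q _ hwS, hsum l (hl.trans_le hS), sub_self]
  funext x
  by_cases hx : x ∈ S
  · exact sub_eq_zero.mp (hdiff x hx)
  · have hxz : ¬∃ j, z j = x := fun ⟨j, hj⟩ => hx (hj ▸ hzS j)
    have hxw : ¬∃ j, w j = x := fun ⟨j, hj⟩ => hx (hj ▸ hwS j)
    rw [extend_apply' _ _ _ hxz, extend_apply' _ _ _ hxw]

theorem support_extend_zero_eq_range [Zero M] {z : ι → α} (hz : Injective z) {p : ι → M}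
    (hp : ∀ j, p j ≠ 0) : support (extend z p 0) = Set.range z := by
  rw [support_extend_zero hz, support_eq_univ hp, Set.image_univ]

theorem exists_equiv_of_extend_eq [Zero M] {z : ι → α} {w : κ → α} (hz : Injective z)
    (hw : Injective w) {p : ι → M} {q : κ → M} (hp : ∀ j, p j ≠ 0) (hq : ∀ j, q j ≠ 0)
    (h : extend z p 0 = extend w q 0) :
    ∃ σ : κ ≃ ι, ∀ j, q j = p (σ j) ∧ w j = z (σ j) := by
  have hrange : Set.range w = Set.range z := by
    rw [← support_extend_zero_eq_range hw hq, ← h, support_extend_zero_eq_range hz hp]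
  let σ : κ ≃ ι := (Equiv.ofInjective w hw).trans
    ((Equiv.setCongr hrange).trans (Equiv.ofInjective z hz).symm)
  have hσ : ∀ j, z (σ j) = w j := fun j => Equiv.apply_ofInjective_symm hz _
  refine ⟨σ, fun j => ⟨?_, (hσ j).symm⟩⟩
  rw [← hz.extend_apply p 0, hσ, h, hw.extend_apply]

theorem stmt_8_general (a b : ℕ) (hb : b ≤ a)
    (z : Fin a → ℂ) (p : Fin a → ℂ)
    (hz : Function.Injective z) (hp : ∀ j, p j ≠ 0)
    (w : Fin b → ℂ) (q : Fin b → ℂ)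
    (hw : Function.Injective w) (hq : ∀ j, q j ≠ 0)
    (hsyn : ∀ l : ℕ, l ≤ 2 * a - 1 →
      (∑ j, p j * z j ^ l) = ∑ j, q j * w j ^ l) :
    b = a ∧ ∃ σ : Fin b ≃ Fin a, ∀ j : Fin b, q j = p (σ j) ∧ w j = z (σ j) := by
  have hext : extend z p 0 = extend w q 0 :=
    extend_eq_of_sum_mul_pow_eq (n := 2 * a) hz hw p q (by simp; omega)
      fun l hl => hsyn l (by omega)
  obtain ⟨σ, hσ⟩ := exists_equiv_of_extend_eq hz hw hp hq hext
  exact ⟨by simpa using Fintype.card_congr σ, σ, hσ⟩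

/-- Uniqueness of sparse exponential-sum representations from `2a` syndromes:
    if two representations with at most `a` distinct nodes and nonzero
    coefficients agree on the syndromes `m_0, ..., m_{2a-1}`, they coincide up
    to a permutation (in particular they have the same size). -/
theorem stmt_8 (a b : ℕ) (ha : 0 < a) (hb : b ≤ a)
    (z : Fin a → ℂ) (p : Fin a → ℂ)
    (hz : Function.Injective z) (hp : ∀ j, p j ≠ 0)
    (w : Fin b → ℂ) (q : Fin b → ℂ)
    (hw : Function.Injective w) (hq : ∀ j, q j ≠ 0)
    (hsyn : ∀ l : ℕ, l ≤ 2 * a - 1 →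
      (∑ j, p j * z j ^ l) = ∑ j, q j * w j ^ l) :
    b = a ∧ ∃ σ : Fin b ≃ Fin a, ∀ j : Fin b, q j = p (σ j) ∧ w j = z (σ j) :=
  stmt_8_general a b hb z p hz hp w q hw hq hsyn
end

section
/- Suppose M = M_s + M_ns ∈ ℂ^{a_m × a_m}, where M_ns satisfies σ_1(M_ns) ≤ a_m d q_max, and M_s is either zero (case a = 0) or satisfies σ_1(M_s) ≥ a_m ε_min (case a = 1). If ε_min > 2 d q_max, then σ_1(M) > a_m d q_max in case a = 1, and σ_1(M) ≤ a_m d q_max in case a = 0; hence thresholding σ_1(M) at a_m d q_max distinguishes the two cases. -/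
/-!
The largest singular value is the ℓ² operator norm: the largest eigenvalue of the positive
matrix `Aᴴ * A` is `‖Aᴴ * A‖` (in a C⋆-algebra the norm of a positive element lies in its
spectrum), and `‖Aᴴ * A‖ = ‖A‖ ^ 2` is the C⋆-identity. Weyl's inequality for `σ₁` is then the
triangle inequality for this norm.
-/

/-- The `j`-th largest singular value of a complex `n×n` matrix `A`
    (`j = 0` gives the largest). -/
noncomputable def singVal {n : ℕ} (A : Matrix (Fin n) (Fin n) ℂ) (j : Fin n) : ℝ :=
  Real.sqrt ((Matrix.isHermitian_conjTranspose_mul_self A).eigenvalues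
    (Tuple.sort (Matrix.isHermitian_conjTranspose_mul_self A).eigenvalues j.rev))

open scoped Matrix.Norms.L2Operator MatrixOrder ComplexOrder

theorem Tuple.isGreatest_sort_rev_zero {α : Type*} [LinearOrder α] {n : ℕ} (hn : 0 < n)
    (f : Fin n → α) : IsGreatest (Set.range f) (f (Tuple.sort f (⟨0, hn⟩ : Fin n).rev)) := by
  refine ⟨⟨_, rfl⟩, ?_⟩
  rintro _ ⟨i, rfl⟩
  have hle : (Tuple.sort f).symm i ≤ (⟨0, hn⟩ : Fin n).rev := Fin.le_rev_iff.mpr (Nat.zero_le _)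
  simpa using Tuple.monotone_sort f hle

theorem Matrix.PosSemidef.isGreatest_eigenvalues_norm {n : Type*} [Fintype n] [DecidableEq n]
    [Nonempty n] {A : Matrix n n ℂ} (hA : A.PosSemidef) :
    IsGreatest (Set.range hA.1.eigenvalues) ‖A‖ := by
  rw [← hA.1.spectrum_real_eq_range_eigenvalues]
  refine ⟨CStarAlgebra.norm_mem_spectrum_of_nonneg (nonneg_iff_posSemidef.mpr hA), fun x hx => ?_⟩
  exact (Real.le_norm_self x).trans (spectrum.norm_le_norm_of_mem hx)

theorem singVal_zero_eq_norm {n : ℕ} (hn : 0 < n) (A : Matrix (Fin n) (Fin n) ℂ) :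
    singVal A ⟨0, hn⟩ = ‖A‖ := by
  have : Nonempty (Fin n) := ⟨⟨0, hn⟩⟩
  have hmax := (Tuple.isGreatest_sort_rev_zero hn _).unique
    (Matrix.posSemidef_conjTranspose_mul_self A).isGreatest_eigenvalues_norm
  rw [singVal, hmax, Matrix.l2_opNorm_conjTranspose_mul_self, Real.sqrt_mul_self (norm_nonneg _)]

theorem singVal_zero_sub_le_singVal_zero_add {n : ℕ} (hn : 0 < n)
    (X Y : Matrix (Fin n) (Fin n) ℂ) :
    singVal X ⟨0, hn⟩ - singVal Y ⟨0, hn⟩ ≤ singVal (X + Y) ⟨0, hn⟩ := by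
  simp only [singVal_zero_eq_norm]
  simpa using norm_sub_le_norm_add X Y

theorem stmt_13_general (a_m d : ℕ) (ha : 0 < a_m) (q_max ε_min : ℝ)
    (Ms Mns M : Matrix (Fin a_m) (Fin a_m) ℂ) (hM : M = Ms + Mns)
    (hns : singVal Mns ⟨0, ha⟩ ≤ a_m * d * q_max)
    (hε : 2 * d * q_max < ε_min) :
    (Ms = 0 → singVal M ⟨0, ha⟩ ≤ a_m * d * q_max) ∧
    ((a_m : ℝ) * ε_min ≤ singVal Ms ⟨0, ha⟩ →
      (a_m : ℝ) * d * q_max < singVal M ⟨0, ha⟩) := by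
  refine ⟨fun hMs => by rwa [hM, hMs, zero_add], fun hMs => ?_⟩
  have weyl := singVal_zero_sub_le_singVal_zero_add ha Ms Mns
  have gap : 2 * ((a_m : ℝ) * d * q_max) < a_m * ε_min := by
    have : (0 : ℝ) < a_m := by exact_mod_cast ha
    nlinarith
  rw [hM]
  linarith

/-- Correct determination of the number of collisions (Theorem 6): with
    `M = M_s + M_ns`, `σ_1(M_ns) ≤ a_m d q_max` and `ε_min > 2 d q_max`,
    thresholding `σ_1(M)` at `a_m d q_max` distinguishes the case `a = 0`
    (`M_s = 0`) from the case `a = 1` (`σ_1(M_s) ≥ a_m ε_min`). -/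
theorem stmt_13 (a_m d : ℕ) (ha : 0 < a_m) (q_max ε_min : ℝ) (hq : 0 ≤ q_max)
    (Ms Mns M : Matrix (Fin a_m) (Fin a_m) ℂ) (hM : M = Ms + Mns)
    (hns : singVal Mns ⟨0, ha⟩ ≤ a_m * d * q_max)
    (hε : 2 * d * q_max < ε_min) :
    (Ms = 0 → singVal M ⟨0, ha⟩ ≤ a_m * d * q_max) ∧
    ((a_m : ℝ) * ε_min ≤ singVal Ms ⟨0, ha⟩ →
      (a_m : ℝ) * d * q_max < singVal M ⟨0, ha⟩) :=
  stmt_13_general a_m d ha q_max ε_min Ms Mns M hM hns hε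
end
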